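/- Let N ≥ 1, let Π¹, …, Πᴺ be finite nonempty sets with product Π, let γⁱ, κⁱ ∈ (0,1) for each i, let T ⊆ Π be nonempty, and let A be any row-stochastic matrix on Π satisfying A(π, π) ≥ ∏_{i=1}^N (1 − γⁱ) for every π ∈ T and A(π, T) ≥ ∏_{i=1}^N κⁱ/|Πⁱ| for every π ∉ T. Then for every ε ∈ (0,1) there exists γ̄ > 0 (depending on ε and the κⁱ and |Πⁱ|) such that whenever γⁱ ∈ (0, γ̄) for all i, every stationary distribution μ* of A satisfies μ*(T) ≥ 1 − ε/2. -/
import Mathlib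


open Finset

private lemma one_sub_sum_le_prod_one_sub' {ι : Type*} (s : Finset ι) (f : ι → ℝ)
    (h0 : ∀ i ∈ s, 0 ≤ f i) (h1 : ∀ i ∈ s, f i ≤ 1) :
    1 - ∑ i ∈ s, f i ≤ ∏ i ∈ s, (1 - f i) := by
  induction s using Finset.cons_induction with
  | empty => simp
  | cons a s ha ih =>
    rw [Finset.prod_cons, Finset.sum_cons]
    have hs0 : 0 ≤ ∑ i ∈ s, f i :=
      Finset.sum_nonneg fun i hi => h0 i (Finset.mem_cons_of_mem hi)
    have hih : 1 - ∑ i ∈ s, f i ≤ ∏ i ∈ s, (1 - f i) :=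
      ih (fun i hi => h0 i (Finset.mem_cons_of_mem hi))
        (fun i hi => h1 i (Finset.mem_cons_of_mem hi))
    have ha0 : 0 ≤ f a := h0 a (Finset.mem_cons_self a s)
    have ha1 : f a ≤ 1 := h1 a (Finset.mem_cons_self a s)
    nlinarith [mul_le_mul_of_nonneg_left hih (by linarith : (0:ℝ) ≤ 1 - f a)]

/-- Lemma 2 quantitative form: let `Π¹, …, Πᴺ` be finite nonempty sets, `κⁱ ∈ (0,1)`,
`T ⊆ Π := Π¹ × ⋯ × Πᴺ` nonempty, and let `A` be any row-stochastic matrix on `Π` with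
`A(π, π) ≥ ∏ᵢ (1 − γⁱ)` for `π ∈ T` and `A(π, T) ≥ ∏ᵢ κⁱ/|Πⁱ|` for `π ∉ T`. Then for
every `ε ∈ (0,1)` there exists `γ̄ > 0` (depending only on `ε`, the `κⁱ` and the
`|Πⁱ|`) such that whenever each `γⁱ ∈ (0, γ̄)` (and `γⁱ < 1`), every stationary
distribution `μ*` of `A` satisfies `μ*(T) ≥ 1 − ε/2`. -/
theorem small_exploration_stationary_mass
    {N : ℕ} (hN : 1 ≤ N) (PI : Fin N → Type*)
    [∀ i, Fintype (PI i)] [∀ i, Nonempty (PI i)]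
    (κ : Fin N → ℝ) (hκ : ∀ i, κ i ∈ Set.Ioo (0 : ℝ) 1)
    (T : Finset (∀ j, PI j)) (hTne : T.Nonempty)
    (ε : ℝ) (hε : ε ∈ Set.Ioo (0 : ℝ) 1) :
    ∃ γbar > (0 : ℝ), ∀ γ : Fin N → ℝ,
      (∀ i, γ i ∈ Set.Ioo (0 : ℝ) γbar) → (∀ i, γ i < 1) →
      ∀ A : (∀ j, PI j) → (∀ j, PI j) → ℝ,
        (∀ π π', 0 ≤ A π π') → (∀ π, ∑ π', A π π' = 1) →
        (∀ π ∈ T, ∏ i, (1 - γ i) ≤ A π π) →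
        (∀ π ∉ T, ∏ i, κ i / (Fintype.card (PI i) : ℝ) ≤ ∑ π' ∈ T, A π π') →
        ∀ μstar : (∀ j, PI j) → ℝ,
          (∀ π, 0 ≤ μstar π) → (∑ π, μstar π = 1) →
          (∀ π', ∑ π, μstar π * A π π' = μstar π') →
          1 - ε / 2 ≤ ∑ π ∈ T, μstar π := by
  classical
  obtain ⟨hε0, hε1⟩ := hε
  have hN0 : (0:ℝ) < N := by exact_mod_cast hN
  set c : ℝ := ∏ i, κ i / (Fintype.card (PI i) : ℝ) with hc
  have hcpos : 0 < c := Finset.prod_pos fun i _ =>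
    div_pos (hκ i).1 (by exact_mod_cast Fintype.card_pos)
  refine ⟨c * ε / (2 * N), by positivity, ?_⟩
  intro γ hγ hγ1 A hA0 hArow hAdiag hAT μstar hμ0 hμsum hstat
  -- bound on 1 - ∏ (1 - γ i)
  have hsum : ∑ i : Fin N, γ i ≤ c * ε / 2 := by
    calc ∑ i : Fin N, γ i ≤ ∑ _i : Fin N, c * ε / (2 * N) :=
          Finset.sum_le_sum fun i _ => le_of_lt (hγ i).2
      _ = N * (c * ε / (2 * N)) := by simp [mul_comm]
      _ = c * ε / 2 := by
          field_simp
  have hp : 1 - c * ε / 2 ≤ ∏ i, (1 - γ i) := by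
    have := one_sub_sum_le_prod_one_sub' Finset.univ γ
      (fun i _ => le_of_lt (hγ i).1) (fun i _ => le_of_lt (hγ1 i))
    linarith
  set m : ℝ := ∑ π ∈ T, μstar π with hm
  have hm0 : 0 ≤ m := Finset.sum_nonneg fun π _ => hμ0 π
  have hm1 : m ≤ 1 := by
    rw [hm, ← hμsum]
    exact Finset.sum_le_sum_of_subset_of_nonneg (Finset.subset_univ T)
      fun π _ _ => hμ0 π
  have hcomp : ∑ π ∈ Tᶜ, μstar π = 1 - m := by
    have := Finset.sum_add_sum_compl T μstar
    rw [hμsum] at this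
    linarith
  -- balance equation
  have hbal : m = ∑ π, μstar π * ∑ π' ∈ T, A π π' := by
    calc m = ∑ π' ∈ T, ∑ π, μstar π * A π π' := by
            rw [hm]; exact Finset.sum_congr rfl fun π' _ => (hstat π').symm
      _ = ∑ π, ∑ π' ∈ T, μstar π * A π π' := Finset.sum_comm
      _ = ∑ π, μstar π * ∑ π' ∈ T, A π π' := by
            exact Finset.sum_congr rfl fun π _ => (Finset.mul_sum _ _ _).symm
  have hsplit : m = ∑ π ∈ T, μstar π * ∑ π' ∈ T, A π π'
      + ∑ π ∈ Tᶜ, μstar π * ∑ π' ∈ T, A π π' := by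
    rw [hbal, ← Finset.sum_add_sum_compl T]
  have h1 : ∑ π ∈ T, μstar π * (∏ i, (1 - γ i))
      ≤ ∑ π ∈ T, μstar π * ∑ π' ∈ T, A π π' := by
    refine Finset.sum_le_sum fun π hπ => ?_
    refine mul_le_mul_of_nonneg_left ?_ (hμ0 π)
    calc ∏ i, (1 - γ i) ≤ A π π := hAdiag π hπ
      _ ≤ ∑ π' ∈ T, A π π' := Finset.single_le_sum (fun π' _ => hA0 π π') hπ
  have h2 : ∑ π ∈ Tᶜ, μstar π * c ≤ ∑ π ∈ Tᶜ, μstar π * ∑ π' ∈ T, A π π' := by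
    refine Finset.sum_le_sum fun π hπ => ?_
    exact mul_le_mul_of_nonneg_left (hAT π (Finset.mem_compl.mp hπ)) (hμ0 π)
  have key : m * (∏ i, (1 - γ i)) + (1 - m) * c ≤ m := by
    have e1 : ∑ π ∈ T, μstar π * (∏ i, (1 - γ i)) = m * (∏ i, (1 - γ i)) := by
      rw [← Finset.sum_mul, hm]
    have e2 : ∑ π ∈ Tᶜ, μstar π * c = (1 - m) * c := by
      rw [← Finset.sum_mul, hcomp]
    linarith [hsplit, h1, h2]
  -- conclude
  have hprod1 : ∏ i, (1 - γ i) ≤ 1 :=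
    Finset.prod_le_one (fun i _ => by linarith [hγ1 i])
      (fun i _ => by linarith [(hγ i).1])
  have hmm : m * (1 - ∏ i, (1 - γ i)) ≤ 1 * (c * ε / 2) := by
    apply mul_le_mul hm1 (by linarith) (by nlinarith) zero_le_one
  have : c * (1 - ε / 2) ≤ m * c := by nlinarith
  have := le_of_mul_le_mul_left (by nlinarith : c * (1 - ε/2) ≤ c * m) hcpos
  linarith
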